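/- Suppose for all t ≥ t₀: -k(t) ≥ α > 0, k'(t) + 2 b(t) k(t) ≤ 0, and there exist α₃ > 0, t₃ ≥ t₀ with -k'(t) - 2 b(t) k(t) ≥ (α₃/t) b(t)² k(t)² for t ≥ t₃. Then the zero solution of u'' + b u' + k u = 0 is unstable. -/

import Mathlib

/-
Take the solution with `u t₀ = c > 0`, `u' t₀ = 0` and suppose it stays in the unit disc. The
energy `R = u² + u'²/k` has `R' = -(k' + 2bk) u'²/k² ≥ 0`, so `u² ≥ R ≥ c²` and `u ≥ c` throughout.
The ratio `v = u'/u` satisfies the Riccati equation `v' = -k - bv - v² ≥ αc² - bv`, while the rate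
hypothesis gives `R' ≥ (α₃c²/t) (bv)²`, so `∫ (bv)²/t` converges because `R` is bounded. By AM-GM,
`∫_{T₁}^{T} bv` is then a small multiple of `T` once `T₁` is large, so `v` grows linearly,
contradicting `v ≤ 1/c`.
-/

open Set Real MeasureTheory Filter

/-- Stability of the zero solution of u'' + b u' + k u = 0 on [t₀, ∞). -/
def IsStableZero (t₀ : ℝ) (b k : ℝ → ℝ) : Prop :=
  ∀ ε > (0 : ℝ), ∃ δ > (0 : ℝ), ∀ u u' u'' : ℝ → ℝ,
    (∀ t ≥ t₀, HasDerivAt u (u' t) t) →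
    (∀ t ≥ t₀, HasDerivAt u' (u'' t) t) →
    (∀ t ≥ t₀, u'' t + b t * u' t + k t * u t = 0) →
    u t₀ ^ 2 + u' t₀ ^ 2 < δ ^ 2 →
    ∀ t ≥ t₀, u t ^ 2 + u' t ^ 2 < ε ^ 2

open Topology

section LinearODE

variable {E : Type*} [NormedAddCommGroup E] [NormedSpace ℝ E] {γ γ₁ γ₂ : ℝ → E} {v : ℝ → E → E}
  {A : ℝ → E →L[ℝ] E}

theorem IsIntegralCurveOn.congr {s : Set ℝ} (h : IsIntegralCurveOn γ₁ v s) (heq : EqOn γ₂ γ₁ s) :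
    IsIntegralCurveOn γ₂ v s := fun t ht => by
  rw [heq ht]
  exact (h t ht).congr heq (heq ht)

theorem IsIntegralCurveOn.union_of_isClosed {s s' : Set ℝ} (h : IsIntegralCurveOn γ v s)
    (h' : IsIntegralCurveOn γ v s') (hs : IsClosed s) (hs' : IsClosed s') :
    IsIntegralCurveOn γ v (s ∪ s') := by
  have hasDerivWithinAt {I : Set ℝ} (hI : IsClosed I) (hγ : IsIntegralCurveOn γ v I) (t : ℝ) :
      HasDerivWithinAt γ (v t (γ t)) I t := by
    by_cases ht : t ∈ I
    · exact hγ t ht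
    · exact HasFDerivWithinAt.of_notMem_closure (hI.closure_eq.symm ▸ ht)
  exact fun t _ => (hasDerivWithinAt hs h t).union (hasDerivWithinAt hs' h' t)

theorem IsIntegralCurveOn.ite_Icc {a s r : ℝ} (h₁ : IsIntegralCurveOn γ₁ v (Icc a s))
    (h₂ : IsIntegralCurveOn γ₂ v (Icc s r)) (heq : γ₁ s = γ₂ s) (has : a ≤ s) (hsr : s ≤ r) :
    IsIntegralCurveOn (fun t => if t ≤ s then γ₁ t else γ₂ t) v (Icc a r) := by
  rw [← Icc_union_Icc_eq_Icc has hsr]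
  refine (h₁.congr fun t ht => ?_).union_of_isClosed (h₂.congr fun t ht => ?_) isClosed_Icc
    isClosed_Icc
  · simp [ht.2]
  · rcases ht.1.eq_or_lt with rfl | hlt
    · simp [heq]
    · simp [not_le.2 hlt]

theorem exists_hasDerivAt_eqOn_Ici {f f' : ℝ → E} {a : ℝ}
    (h : ∀ t ≥ a, HasDerivWithinAt f (f' t) (Ici a) t) :
    ∃ g : ℝ → E, EqOn g f (Ici a) ∧ ∀ t ≥ a, HasDerivAt g (f' t) t := by
  set g : ℝ → E := fun t => if a ≤ t then f t else f a + (t - a) • f' a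
  have hgf : EqOn g f (Ici a) := fun t ht => if_pos ht
  refine ⟨g, hgf, fun t ht => ?_⟩
  have hright : HasDerivWithinAt g (f' t) (Ici a) t := (h t ht).congr hgf (hgf ht)
  rcases (ge_iff_le.1 ht).eq_or_lt with rfl | hlt
  · have hline : HasDerivAt (fun s => f a + (s - a) • f' a) (f' a) a := by
      simpa using (((hasDerivAt_id a).sub_const a).smul_const (f' a)).const_add (f a)
    have hleft : HasDerivWithinAt g (f' a) (Iic a) a := by
      refine hline.hasDerivWithinAt.congr (fun s hs => ?_) (by simp [g])
      rcases (mem_Iic.1 hs).eq_or_lt with rfl | hlt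
      · simp [g]
      · simp [g, not_le.2 hlt]
    simpa using hleft.union hright
  · exact hright.hasDerivAt (Ici_mem_nhds hlt)

theorem eqOn_of_isIntegralCurveOn_Icc {a b : ℝ} (hA : ContinuousOn A (Icc a b))
    (h₁ : IsIntegralCurveOn γ₁ (fun t y => A t y) (Icc a b))
    (h₂ : IsIntegralCurveOn γ₂ (fun t y => A t y) (Icc a b)) (h : γ₁ a = γ₂ a) :
    EqOn γ₁ γ₂ (Icc a b) := by
  obtain ⟨C, hC⟩ := isCompact_Icc.exists_bound_of_continuousOn hA
  have hlip (t : ℝ) (ht : t ∈ Ico a b) : LipschitzWith (max C 0).toNNReal (A t) :=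
    (A t).lipschitz.weaken <| by
      simpa [← NNReal.coe_le_coe] using (hC t (Ico_subset_Icc_self ht)).trans (le_max_left C 0)
  have hderiv {γ : ℝ → E} (hγ : IsIntegralCurveOn γ (fun t y => A t y) (Icc a b)) (t : ℝ)
      (ht : t ∈ Ico a b) : HasDerivWithinAt γ (A t (γ t)) (Ici t) t :=
    (hγ t (Ico_subset_Icc_self ht)).mono_of_mem_nhdsWithin (Icc_mem_nhdsGE_of_mem ht)
  exact ODE_solution_unique_of_mem_Icc_right (s := fun _ => univ)
    (fun t ht => (hlip t ht).lipschitzOnWith)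
    h₁.continuousOn (hderiv h₁) (fun _ _ => trivial) h₂.continuousOn (hderiv h₂)
    (fun _ _ => trivial) h

variable [CompleteSpace E]

theorem exists_isIntegralCurveOn_Icc_of_norm_le {s r M : ℝ} (hsr : s ≤ r)
    (hA : ContinuousOn A (Icc s r)) (hM : ∀ t ∈ Icc s r, ‖A t‖ ≤ M) (hstep : M * (r - s) ≤ 1 / 2)
    (x : E) : ∃ γ, γ s = x ∧ IsIntegralCurveOn γ (fun t y => A t y) (Icc s r) := by
  have hM0 : 0 ≤ M := (norm_nonneg _).trans (hM s ⟨le_rfl, hsr⟩)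
  -- On the ball of radius `‖x‖` about `x` the field is bounded by `2 M ‖x‖`, and the step
  -- condition keeps the curve inside that ball.
  have hPL : IsPicardLindelof (fun t y => A t y) (⟨s, left_mem_Icc.2 hsr⟩ : Icc s r) x ‖x‖₊ 0
      (2 * M.toNNReal * ‖x‖₊) M.toNNReal :=
    { lipschitzOnWith := fun t ht =>
        ((A t).lipschitz.weaken (by simpa [← NNReal.coe_le_coe, hM0] using hM t ht)).lipschitzOnWith
      continuousOn := fun y _ => hA.clm_apply continuousOn_const
      norm_le := fun t ht y hy => by
        have hy : ‖y‖ ≤ 2 * ‖x‖ := by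
          have := norm_le_norm_add_norm_sub' y x
          rw [Metric.mem_closedBall, dist_eq_norm] at hy
          simp only [coe_nnnorm] at hy
          linarith
        simp only [NNReal.coe_mul, NNReal.coe_ofNat, Real.coe_toNNReal _ hM0, coe_nnnorm]
        calc ‖A t y‖ ≤ ‖A t‖ * ‖y‖ := (A t).le_opNorm y
          _ ≤ M * (2 * ‖x‖) := mul_le_mul (hM t ht) hy (norm_nonneg _) hM0
          _ = 2 * M * ‖x‖ := by ring
      mul_max_le := by
        simp only [NNReal.coe_mul, NNReal.coe_ofNat, Real.coe_toNNReal _ hM0, coe_nnnorm,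
          NNReal.coe_zero, sub_self, sub_zero, max_eq_left (sub_nonneg.2 hsr)]
        nlinarith [norm_nonneg x] }
  exact hPL.exists_eq_forall_mem_Icc_hasDerivWithinAt₀

theorem exists_isIntegralCurveOn_Icc {a c : ℝ} (hac : a ≤ c) (hA : ContinuousOn A (Icc a c))
    (x : E) : ∃ γ, γ a = x ∧ IsIntegralCurveOn γ (fun t y => A t y) (Icc a c) := by
  obtain ⟨C, hC⟩ := isCompact_Icc.exists_bound_of_continuousOn hA
  set M := max C 1
  have hM : ∀ t ∈ Icc a c, ‖A t‖ ≤ M := fun t ht => (hC t ht).trans (le_max_left _ _)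
  have hM0 : 0 < M := one_pos.trans_le (le_max_right _ _)
  set h := 1 / (2 * M)
  have hh : 0 < h := by positivity
  have hsub {s r : ℝ} (has : a ≤ s) (hrc : r ≤ c) : Icc s r ⊆ Icc a c := Icc_subset_Icc has hrc
  have key (n : ℕ) : ∀ T ∈ Icc a c, T ≤ a + n * h →
      ∃ γ, γ a = x ∧ IsIntegralCurveOn γ (fun t y => A t y) (Icc a T) := by
    induction n with
    | zero =>
      intro T hT hTn
      obtain rfl : T = a := le_antisymm (by simpa using hTn) hT.1
      exact exists_isIntegralCurveOn_Icc_of_norm_le le_rfl (hA.mono (hsub le_rfl hT.2))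
        (fun t ht => hM t (hsub le_rfl hT.2 ht)) (by simp) x
    | succ n ih =>
      intro T hT hTn
      by_cases hle : T ≤ a + n * h
      · exact ih T hT hle
      set s := a + n * h
      have has : a ≤ s := le_add_of_nonneg_right (by positivity)
      have hsT : s ≤ T := (not_le.1 hle).le
      obtain ⟨γ₁, hγ₁a, hγ₁⟩ := ih s ⟨has, hsT.trans hT.2⟩ le_rfl
      obtain ⟨γ₂, hγ₂s, hγ₂⟩ := exists_isIntegralCurveOn_Icc_of_norm_le hsT
        (hA.mono (hsub has hT.2)) (fun t ht => hM t (hsub has hT.2 ht))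
        (by
          have : T - s ≤ h := by push_cast at hTn; linarith
          calc M * (T - s) ≤ M * h := by gcongr
            _ = 1 / 2 := by simp only [h]; field_simp)
        (γ₁ s)
      exact ⟨_, by simp [has, hγ₁a], hγ₁.ite_Icc hγ₂ hγ₂s.symm has hsT⟩
  obtain ⟨n, hn⟩ := exists_nat_ge ((c - a) / h)
  exact key n c ⟨hac, le_rfl⟩ (by rw [div_le_iff₀ hh] at hn; linarith)

theorem exists_forall_ge_hasDerivAt {t₀ : ℝ} (hA : ContinuousOn A (Ici t₀)) (x : E) :
    ∃ γ : ℝ → E, γ t₀ = x ∧ ∀ t ≥ t₀, HasDerivAt γ (A t (γ t)) t := by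
  choose G hG₀ hG using fun T : ℝ =>
    exists_isIntegralCurveOn_Icc (le_max_left t₀ T) (hA.mono Icc_subset_Ici_self) x
  have hagree (T T' : ℝ) : EqOn (G T) (G T') (Icc t₀ (min (max t₀ T) (max t₀ T'))) :=
    eqOn_of_isIntegralCurveOn_Icc (hA.mono Icc_subset_Ici_self)
      ((hG T).mono (Icc_subset_Icc_right (min_le_left _ _)))
      ((hG T').mono (Icc_subset_Icc_right (min_le_right _ _))) ((hG₀ T).trans (hG₀ T').symm)
  set γ : ℝ → E := fun t => G (t + 1) t
  have hγ (t : ℝ) : EqOn γ (G (t + 1)) (Icc t₀ (t + 1)) := fun s hs =>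
    hagree (s + 1) (t + 1)
      ⟨hs.1, le_min (le_max_of_le_right (by linarith)) (hs.2.trans (le_max_right _ _))⟩
  obtain ⟨g, hgγ, hg⟩ := exists_hasDerivAt_eqOn_Ici (f := γ) (f' := fun t => A t (γ t)) (a := t₀)
    fun t ht => by
      have hmem : Icc t₀ (t + 1) ∈ 𝓝[Ici t₀] t :=
        inter_mem_nhdsWithin _ (Iic_mem_nhds (lt_add_one t))
      have hT : max t₀ (t + 1) = t + 1 := max_eq_right (by linarith [ge_iff_le.1 ht])
      have hGt := hG (t + 1) t (by rw [hT]; exact ⟨ht, by linarith⟩)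
      rw [hT] at hGt
      rw [hγ t ⟨ht, by linarith⟩]
      exact (hGt.mono_of_mem_nhdsWithin hmem).congr_of_eventuallyEq
        (eventually_of_mem hmem (hγ t)) (hγ t ⟨ht, by linarith⟩)
  refine ⟨g, (hgγ self_mem_Ici).trans ((hγ t₀ ⟨le_rfl, by linarith⟩).trans (hG₀ _)),
    fun t ht => ?_⟩
  rw [hgγ ht]
  exact hg t ht

end LinearODE

theorem monotoneOn_of_hasDerivAt_nonneg {D : Set ℝ} (hD : Convex ℝ D) {f f' : ℝ → ℝ}
    (hf : ∀ x ∈ D, HasDerivAt f (f' x) x) (hf'₀ : ∀ x ∈ interior D, 0 ≤ f' x) :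
    MonotoneOn f D :=
  monotoneOn_of_hasDerivWithinAt_nonneg hD (fun x hx => (hf x hx).continuousAt.continuousWithinAt)
    (fun x hx => (hf x (interior_subset hx)).hasDerivWithinAt) hf'₀

theorem MonotoneOn.eventually_forall_ge_le_add {f : ℝ → ℝ} {a η : ℝ} (hf : MonotoneOn f (Ici a))
    (hbdd : BddAbove (f '' Ici a)) (hη : 0 < η) : ∀ᶠ s in atTop, ∀ t ≥ s, f t ≤ f s + η := by
  obtain ⟨_, ⟨s₀, hs₀, rfl⟩, hlt⟩ :=
    exists_lt_of_lt_csSup (nonempty_Ici.image f) (sub_lt_self (sSup (f '' Ici a)) hη)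
  filter_upwards [eventually_ge_atTop s₀] with s hs t hst
  have hsup : f t ≤ sSup (f '' Ici a) := le_csSup hbdd ⟨t, hs₀.trans (hs.trans hst), rfl⟩
  have hmono : f s₀ ≤ f s := hf hs₀ (mem_Ici.2 (hs₀.trans hs)) hs
  linarith

theorem forall_le_of_forall_sq_le {u : ℝ → ℝ} {a c : ℝ} (hc : 0 < c) (hu : ContinuousOn u (Ici a))
    (ha : 0 < u a) (h : ∀ t ≥ a, c ^ 2 ≤ u t ^ 2) : ∀ t ≥ a, c ≤ u t := by
  intro t ht
  by_contra! hlt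
  have hneg : u t < 0 := by nlinarith [h t ht]
  obtain ⟨s, hs, hs0⟩ := intermediate_value_Icc' ht (hu.mono Icc_subset_Ici_self)
    ⟨hneg.le, ha.le⟩
  nlinarith [h s hs.1]

theorem sub_le_sub_of_sub_le_deriv_of_sq_div_le_deriv {v v' R R' y : ℝ → ℝ} {κ β A T₁ T : ℝ}
    (hβ : 0 < β) (hA : 0 < A) (hT₁ : 0 < T₁) (hT : T₁ ≤ T)
    (hv : ∀ t ∈ Icc T₁ T, HasDerivAt v (v' t) t) (hR : ∀ t ∈ Icc T₁ T, HasDerivAt R (R' t) t)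
    (hv' : ∀ t ∈ Ioo T₁ T, κ - y t ≤ v' t) (hR' : ∀ t ∈ Ioo T₁ T, β / t * y t ^ 2 ≤ R' t) :
    κ * (T - T₁) - A / 2 * (R T - R T₁) - (T ^ 2 - T₁ ^ 2) / (4 * A * β) ≤ v T - v T₁ := by
  set F : ℝ → ℝ := fun t => v t - κ * t + A / 2 * R t + t ^ 2 / (4 * A * β)
  have hF : ∀ t ∈ Icc T₁ T,
      HasDerivAt F (v' t - κ + A / 2 * R' t + 2 * t / (4 * A * β)) t := fun t ht => by
    refine ((((hv t ht).sub ((hasDerivAt_id t).const_mul κ)).add ((hR t ht).const_mul (A / 2))).add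
      ((hasDerivAt_pow 2 t).div_const (4 * A * β))).congr_deriv ?_
    simp
  have hF' : ∀ t ∈ Ioo T₁ T, 0 ≤ v' t - κ + A / 2 * R' t + 2 * t / (4 * A * β) := by
    intro t ht
    have htpos : 0 < t := hT₁.trans ht.1
    -- AM-GM: `y ≤ (A / 2) (β / t) y² + t / (2 A β)`
    have hamgm : y t ≤ A / 2 * (β / t * y t ^ 2) + 2 * t / (4 * A * β) := by
      have hsq : 0 ≤ (A * β * y t - t) ^ 2 / (2 * t * A * β) := by positivity
      have : A / 2 * (β / t * y t ^ 2) + 2 * t / (4 * A * β) - y t =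
          (A * β * y t - t) ^ 2 / (2 * t * A * β) := by
        field_simp
        ring
      linarith
    linarith [hv' t ht, mul_le_mul_of_nonneg_left (hR' t ht) (by positivity : 0 ≤ A / 2)]
  have hmono := monotoneOn_of_hasDerivAt_nonneg (convex_Icc T₁ T) hF
    (by rwa [interior_Icc]) (left_mem_Icc.2 hT) (right_mem_Icc.2 hT) hT
  simp only [F] at hmono
  have : (T ^ 2 - T₁ ^ 2) / (4 * A * β) = T ^ 2 / (4 * A * β) - T₁ ^ 2 / (4 * A * β) :=
    sub_div _ _ _
  linarith

theorem not_bddAbove_of_sub_le_deriv_of_sq_div_le_deriv {v v' R R' y : ℝ → ℝ} {κ β a : ℝ}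
    (hκ : 0 < κ) (hβ : 0 < β) (ha : 0 < a)
    (hv : ∀ t ≥ a, HasDerivAt v (v' t) t) (hR : ∀ t ≥ a, HasDerivAt R (R' t) t)
    (hv' : ∀ t ≥ a, κ - y t ≤ v' t) (hR' : ∀ t ≥ a, β / t * y t ^ 2 ≤ R' t)
    (hRbdd : BddAbove (R '' Ici a)) : ¬ BddAbove (v '' Ici a) := by
  rintro ⟨M, hM⟩
  have hRmono : MonotoneOn R (Ici a) := monotoneOn_of_hasDerivAt_nonneg (convex_Ici a) hR
    fun t ht => by
      rw [interior_Ici] at ht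
      exact (by have := (ha.trans ht).le; positivity : 0 ≤ β / t * y t ^ 2).trans (hR' t ht.le)
  obtain ⟨T₁, hT₁, haT₁⟩ := ((hRmono.eventually_forall_ge_le_add hRbdd
    (by positivity : 0 < κ ^ 2 * β / 2)).and (eventually_ge_atTop a)).exists
  set T := max (4 * T₁) (4 * (M - v T₁ + 1) / κ)
  have hT₁T : 4 * T₁ ≤ T := le_max_left _ _
  have hMT : 4 * (M - v T₁ + 1) / κ ≤ T := le_max_right _ _
  have hT₁0 : 0 < T₁ := ha.trans_le haT₁
  have hT0 : 0 < T := by linarith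
  -- With `A = T / (κ β)` and tail `κ² β / 2`, both error terms of the comparison are `κ T / 4`.
  have hcmp := sub_le_sub_of_sub_le_deriv_of_sq_div_le_deriv (A := T / (κ * β)) (T₁ := T₁)
    (T := T) hβ (by positivity) hT₁0 (by linarith) (fun t ht => hv t (haT₁.trans ht.1))
    (fun t ht => hR t (haT₁.trans ht.1)) (fun t ht => hv' t (haT₁.trans ht.1.le))
    (fun t ht => hR' t (haT₁.trans ht.1.le))
  have h1 : T / (κ * β) / 2 * (R T - R T₁) ≤ κ * T / 4 := by
    calc T / (κ * β) / 2 * (R T - R T₁) ≤ T / (κ * β) / 2 * (κ ^ 2 * β / 2) := by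
          gcongr
          linarith [hT₁ T (by linarith)]
      _ = κ * T / 4 := by field_simp; ring
  have h2 : (T ^ 2 - T₁ ^ 2) / (4 * (T / (κ * β)) * β) ≤ κ * T / 4 := by
    calc (T ^ 2 - T₁ ^ 2) / (4 * (T / (κ * β)) * β) ≤ T ^ 2 / (4 * (T / (κ * β)) * β) := by
          gcongr
          nlinarith
      _ = κ * T / 4 := by field_simp
  have h3 : M - v T₁ + 1 ≤ κ * T / 4 := by
    rw [div_le_iff₀ hκ] at hMT
    linarith
  have hvT : v T ≤ M := hM ⟨T, haT₁.trans (by linarith), rfl⟩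
  linarith [mul_le_mul_of_nonneg_left hT₁T hκ.le]

def companion (p q : ℝ) : ℝ × ℝ →L[ℝ] ℝ × ℝ :=
  (ContinuousLinearMap.snd ℝ ℝ ℝ).prod
    (-p • ContinuousLinearMap.snd ℝ ℝ ℝ - q • ContinuousLinearMap.fst ℝ ℝ ℝ)

theorem continuousOn_companion {s : Set ℝ} {p q : ℝ → ℝ} (hp : ContinuousOn p s)
    (hq : ContinuousOn q s) : ContinuousOn (fun t => companion (p t) (q t)) s :=
  (ContinuousLinearMap.prodₗᵢ ℝ).continuous.comp_continuousOn
    (f := fun t => (ContinuousLinearMap.snd ℝ ℝ ℝ,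
      -p t • ContinuousLinearMap.snd ℝ ℝ ℝ - q t • ContinuousLinearMap.fst ℝ ℝ ℝ)) (by fun_prop)

theorem exists_hasDerivAt_secondOrder {t₀ : ℝ} {b k : ℝ → ℝ} (hb : ContinuousOn b (Ici t₀))
    (hk : ContinuousOn k (Ici t₀)) (x₀ v₀ : ℝ) :
    ∃ u u' : ℝ → ℝ, u t₀ = x₀ ∧ u' t₀ = v₀ ∧ (∀ t ≥ t₀, HasDerivAt u (u' t) t) ∧
      ∀ t ≥ t₀, HasDerivAt u' (-b t * u' t - k t * u t) t := by
  obtain ⟨γ, hγ₀, hγ⟩ := exists_forall_ge_hasDerivAt (continuousOn_companion hb hk) (x₀, v₀)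
  refine ⟨fun t => (γ t).1, fun t => (γ t).2, by simp [hγ₀], by simp [hγ₀], fun t ht => ?_,
    fun t ht => ?_⟩
  · exact hasFDerivAt_fst.comp_hasDerivAt t (hγ t ht)
  · exact hasFDerivAt_snd.comp_hasDerivAt t (hγ t ht)

noncomputable def energy (k u u' : ℝ → ℝ) (t : ℝ) : ℝ := u t ^ 2 + u' t ^ 2 / k t

theorem hasDerivAt_energy {b k k' u u' : ℝ → ℝ} {t : ℝ} (hu : HasDerivAt u (u' t) t)
    (hu' : HasDerivAt u' (-b t * u' t - k t * u t) t) (hk : HasDerivAt k (k' t) t) (hk₀ : k t ≠ 0) :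
    HasDerivAt (energy k u u') (-(k' t + 2 * b t * k t) * u' t ^ 2 / k t ^ 2) t := by
  refine ((hu.pow 2).add ((hu'.pow 2).div hk hk₀)).congr_deriv ?_
  field_simp
  simp only [Pi.pow_apply]
  ring

theorem hasDerivAt_riccati {b k u u' : ℝ → ℝ} {t : ℝ} (hu : HasDerivAt u (u' t) t)
    (hu' : HasDerivAt u' (-b t * u' t - k t * u t) t) (hu₀ : u t ≠ 0) :
    HasDerivAt (fun s => u' s / u s) (-k t - b t * (u' t / u t) - (u' t / u t) ^ 2) t := by
  refine (hu'.div hu hu₀).congr_deriv ?_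
  field_simp
  ring

theorem mul_sq_le_neg_sub_div_sq {α K U U' c : ℝ} (hα : 0 < α) (hK : α ≤ -K) (hc : 0 < c)
    (hcU : c ≤ U) (hU : U ^ 2 ≤ 1) (hE : c ^ 2 ≤ U ^ 2 + U' ^ 2 / K) :
    α * c ^ 2 ≤ -K - (U' / U) ^ 2 := by
  have hK₀ : K < 0 := by linarith
  have hU₀ : 0 < U := hc.trans_le hcU
  have hE' : -K * c ^ 2 ≤ -K * U ^ 2 - U' ^ 2 := by
    have h := mul_le_mul_of_nonneg_left hE (neg_nonneg.2 hK₀.le)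
    have hdiv : -K * (U' ^ 2 / K) = -U' ^ 2 := by field_simp [hK₀.ne]
    linarith
  rw [div_pow, le_sub_iff_add_le, ← le_sub_iff_add_le', div_le_iff₀ (by positivity)]
  nlinarith [mul_le_mul_of_nonneg_left hU (by positivity : 0 ≤ α * c ^ 2),
    mul_le_mul_of_nonneg_right hK (sq_nonneg c)]

theorem mul_sq_div_mul_sq_le {α₃ t B K K' U U' c : ℝ} (hα₃ : 0 < α₃) (ht : 0 < t) (hK : K ≠ 0)
    (hc : 0 < c) (hcU : c ≤ U) (hrate : α₃ / t * B ^ 2 * K ^ 2 ≤ -K' - 2 * B * K) :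
    α₃ * c ^ 2 / t * (B * (U' / U)) ^ 2 ≤ -(K' + 2 * B * K) * U' ^ 2 / K ^ 2 := by
  have hU₀ : 0 < U := hc.trans_le hcU
  calc α₃ * c ^ 2 / t * (B * (U' / U)) ^ 2 = α₃ / t * B ^ 2 * U' ^ 2 * (c / U) ^ 2 := by ring
    _ ≤ α₃ / t * B ^ 2 * U' ^ 2 :=
      mul_le_of_le_one_right (by positivity) (pow_le_one₀ (by positivity) ((div_le_one hU₀).2 hcU))
    _ = α₃ / t * B ^ 2 * K ^ 2 * (U' ^ 2 / K ^ 2) := by field_simp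
    _ ≤ (-K' - 2 * B * K) * (U' ^ 2 / K ^ 2) := by gcongr
    _ = -(K' + 2 * B * K) * U' ^ 2 / K ^ 2 := by ring

theorem exists_one_le_sq_add_sq {t₀ t₃ α α₃ c : ℝ} {b k k' u u' : ℝ → ℝ} (ht₀ : 0 < t₀)
    (hα : 0 < α) (hα₃ : 0 < α₃) (hc : 0 < c) (hk : ∀ t ≥ t₀, HasDerivAt k (k' t) t)
    (hkα : ∀ t ≥ t₀, α ≤ -k t) (hneg : ∀ t ≥ t₀, k' t + 2 * b t * k t ≤ 0)
    (hrate : ∀ t ≥ t₃, α₃ / t * b t ^ 2 * k t ^ 2 ≤ -k' t - 2 * b t * k t)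
    (hu : ∀ t ≥ t₀, HasDerivAt u (u' t) t)
    (hu' : ∀ t ≥ t₀, HasDerivAt u' (-b t * u' t - k t * u t) t) (hu₀ : u t₀ = c)
    (hu'₀ : u' t₀ = 0) : ∃ t ≥ t₀, 1 ≤ u t ^ 2 + u' t ^ 2 := by
  by_contra! hsmall
  have hk₀ (t : ℝ) (ht : t ≥ t₀) : k t < 0 := by linarith [hkα t ht]
  have hE (t : ℝ) (ht : t ≥ t₀) := hasDerivAt_energy (hu t ht) (hu' t ht) (hk t ht) (hk₀ t ht).ne
  have hEc (t : ℝ) (ht : t ≥ t₀) : c ^ 2 ≤ energy k u u' t := by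
    have := monotoneOn_of_hasDerivAt_nonneg (convex_Ici t₀) hE (fun s hs => by
      rw [interior_Ici] at hs
      have := hneg s (le_of_lt hs)
      exact div_nonneg (mul_nonneg (by linarith) (sq_nonneg _)) (sq_nonneg _))
      self_mem_Ici ht ht
    simpa [energy, hu₀, hu'₀] using this
  have hEu (t : ℝ) (ht : t ≥ t₀) : energy k u u' t ≤ u t ^ 2 := by
    have : u' t ^ 2 / k t ≤ 0 := div_nonpos_of_nonneg_of_nonpos (sq_nonneg _) (hk₀ t ht).le
    simp only [energy]
    linarith
  have hcu : ∀ t ≥ t₀, c ≤ u t := forall_le_of_forall_sq_le hc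
    (fun t ht => (hu t ht).continuousAt.continuousWithinAt) (hu₀ ▸ hc)
    fun t ht => (hEc t ht).trans (hEu t ht)
  have hu₁ (t : ℝ) (ht : t ≥ t₀) : u t ^ 2 ≤ 1 := by nlinarith [hsmall t ht]
  have hge {t : ℝ} (ht : t ≥ max t₀ t₃) : t ≥ t₀ := (le_max_left _ _).trans ht
  refine not_bddAbove_of_sub_le_deriv_of_sq_div_le_deriv (a := max t₀ t₃)
    (v := fun t => u' t / u t) (y := fun t => b t * (u' t / u t)) (by positivity : 0 < α * c ^ 2)
    (by positivity : 0 < α₃ * c ^ 2) (ht₀.trans_le (le_max_left _ _))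
    (fun t ht => hasDerivAt_riccati (hu t (hge ht)) (hu' t (hge ht))
      (hc.trans_le (hcu t (hge ht))).ne')
    (fun t ht => hE t (hge ht))
    (fun t ht => by
      linarith [mul_sq_le_neg_sub_div_sq hα (hkα t (hge ht)) hc (hcu t (hge ht)) (hu₁ t (hge ht))
        (hEc t (hge ht))])
    (fun t ht => mul_sq_div_mul_sq_le hα₃ (ht₀.trans_le (hge ht)) (hk₀ t (hge ht)).ne hc
      (hcu t (hge ht)) (hrate t ((le_max_right _ _).trans ht)))
    ⟨1, ?_⟩ ⟨1 / c, ?_⟩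
  · rintro _ ⟨t, ht, rfl⟩
    exact (hEu t (hge ht)).trans (hu₁ t (hge ht))
  · rintro _ ⟨t, ht, rfl⟩
    have hu'₁ : |u' t| ≤ 1 :=
      abs_le_one_iff_mul_self_le_one.2 (by nlinarith [hsmall t (hge ht)])
    rw [div_le_div_iff₀ (hc.trans_le (hcu t (hge ht))) hc]
    nlinarith [le_abs_self (u' t), hcu t (hge ht)]

theorem stmt_17_general (t₀ α α₃ t₃ : ℝ) (ht₀ : 0 < t₀) (hα : 0 < α) (hα₃ : 0 < α₃)
    (b k k' : ℝ → ℝ)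
    (hb : ContinuousOn b (Ici t₀))
    (hk : ∀ t ≥ t₀, HasDerivAt k (k' t) t)
    (hkα : ∀ t ≥ t₀, α ≤ -k t)
    (hneg : ∀ t ≥ t₀, k' t + 2 * b t * k t ≤ 0)
    (hrate : ∀ t ≥ t₃, α₃ / t * b t ^ 2 * k t ^ 2 ≤ -k' t - 2 * b t * k t) :
    ¬ IsStableZero t₀ b k := by
  intro hstab
  obtain ⟨δ, hδ, hstab⟩ := hstab 1 one_pos
  obtain ⟨u, u', hu₀, hu'₀, hu, hu'⟩ := exists_hasDerivAt_secondOrder hb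
    (fun t ht => (hk t ht).continuousAt.continuousWithinAt) (δ / 2) 0
  obtain ⟨t, ht, hlarge⟩ := exists_one_le_sq_add_sq ht₀ hα hα₃ (half_pos hδ) hk hkα hneg hrate hu
    hu' hu₀ hu'₀
  have hsmall := hstab u u' _ hu hu' (fun t _ => by ring) (by rw [hu₀, hu'₀]; nlinarith) t ht
  linarith

theorem stmt_17 (t₀ α α₃ t₃ : ℝ) (ht₀ : 0 < t₀) (hα : 0 < α) (hα₃ : 0 < α₃)
    (ht₃ : t₃ ≥ t₀) (b k k' : ℝ → ℝ)
    (hb : ContinuousOn b (Ici t₀))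
    (hk : ∀ t ≥ t₀, HasDerivAt k (k' t) t)
    (hk'c : ContinuousOn k' (Ici t₀))
    (hkα : ∀ t ≥ t₀, α ≤ -k t)
    (hneg : ∀ t ≥ t₀, k' t + 2 * b t * k t ≤ 0)
    (hrate : ∀ t ≥ t₃, α₃ / t * b t ^ 2 * k t ^ 2 ≤ -k' t - 2 * b t * k t) :
    ¬ IsStableZero t₀ b k :=
  stmt_17_general t₀ α α₃ t₃ ht₀ hα hα₃ b k k' hb hk hkα hneg hrate
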